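/- arXiv:2402.02749 — 2 statements merged into one kernel-verified Lean document; each statement's English description precedes it below -/
import Mathlib

section
/- Let (Ω, μ) be a measure space, m ≥ 1, and for 1 ≤ j ≤ m let (M_j, ν_j) be a measure space and p_j : Ω → M_j a measurable map. Fix D ∈ ℝ and c_j > 0. Let W be the set of probability densities f on Ω such that S(f) is finite and, for each j, (p_j)_#(f dμ) is absolutely continuous with respect to ν_j with density f_{(p_j)} of finite entropy, and let W₀ ⊆ W. Suppose every f ∈ W₀ satisfies ∑_{j=1}^{m} c_j S(f_{(p_j)}) ≤ S(f) + D. Then for all non-negative measurable functions f_j : M_j → [0,∞) such that ∫ f_j^{1/c_j} dν_j < ∞ for each j, 0 < ∫_Ω ∏_{j=1}^{m} f_j(p_j(x)) dμ(x) < ∞, and the normalized product (∏_{j=1}^{m} f_j∘p_j)/(∫_Ω ∏_{j=1}^{m} f_j∘p_j dμ) belongs to W₀, one has ∫_Ω ∏_{j=1}^{m} f_j(p_j(x)) dμ(x) ≤ e^D ∏_{j=1}^{m} (∫_{M_j} f_j^{1/c_j} dν_j)^{c_j}. -/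
/-!
Put `N = ∫ ∏ j, f j ∘ p j dμ` and `G = (∏ j, f j ∘ p j) / N`, let `g j` be the density of the
pushforward of `G μ` under `p j`, and `A j = ∫ f j ^ (1 / c j) dν j`. Where `G > 0`,
`log G + log N = ∑ j, c j * (log g j + log A j + log u j) ∘ p j` with
`u j = f j ^ (1 / c j) / A j / g j`, and `log u ≤ u - 1`. After pushing forward,
`∫ G * u j ∘ p j dμ = ∫ g j * u j dν j ≤ 1`, so integrating against `G` gives the Gibbs-type bound
`S(G) + log N ≤ ∑ j, c j * (S(g j) + log A j)`. Subadditivity at `G` turns this into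
`log N ≤ D + ∑ j, c j * log A j`.
-/

open MeasureTheory ENNReal

section WithDensity

variable {α β : Type*} [MeasurableSpace α] [MeasurableSpace β] {μ : Measure α} {ν : Measure β}
  {ρ : α → ℝ} {g : β → ℝ} {p : α → β}

theorem integral_withDensity_ofReal (hρ : Measurable ρ) (hρ0 : ∀ x, 0 ≤ ρ x) (ψ : α → ℝ) :
    ∫ x, ψ x ∂μ.withDensity (fun x => ENNReal.ofReal (ρ x)) = ∫ x, ρ x * ψ x ∂μ := by
  rw [integral_withDensity_eq_integral_toReal_smul (by fun_prop)
    (ae_of_all _ fun _ => ofReal_lt_top)]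
  simp only [toReal_ofReal (hρ0 _), smul_eq_mul]

theorem integrable_withDensity_ofReal_iff (hρ : Measurable ρ) (hρ0 : ∀ x, 0 ≤ ρ x) {ψ : α → ℝ} :
    Integrable ψ (μ.withDensity fun x => ENNReal.ofReal (ρ x)) ↔
      Integrable (fun x => ρ x * ψ x) μ := by
  rw [integrable_withDensity_iff_integrable_smul' (by fun_prop)
    (ae_of_all _ fun _ => ofReal_lt_top)]
  simp only [toReal_ofReal (hρ0 _), smul_eq_mul]

theorem ae_comp_of_map_withDensity_eq (hρ : Measurable ρ) (hg : Measurable g) (hp : Measurable p)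
    (hmap : (μ.withDensity fun x => ENNReal.ofReal (ρ x)).map p =
      ν.withDensity fun t => ENNReal.ofReal (g t))
    {P : β → Prop} (hP : ∀ᵐ t ∂ν, 0 < g t → P t) :
    ∀ᵐ x ∂μ, 0 < ρ x → P (p x) := by
  have hPg : ∀ᵐ t ∂ν.withDensity fun t => ENNReal.ofReal (g t), P t :=
    (ae_withDensity_iff (by fun_prop)).2 <|
      hP.mono fun t ht hgt => ht (ofReal_pos.1 (pos_iff_ne_zero.2 hgt))
  rw [← hmap] at hPg
  filter_upwards [(ae_withDensity_iff (by fun_prop)).1 (ae_of_ae_map hp.aemeasurable hPg)]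
    with x hx hρx using hx (ofReal_pos.2 hρx).ne'

theorem integral_mul_comp_of_map_withDensity_eq (hρ : Measurable ρ) (hρ0 : ∀ x, 0 ≤ ρ x)
    (hg : Measurable g) (hg0 : ∀ t, 0 ≤ g t) (hp : Measurable p)
    (hmap : (μ.withDensity fun x => ENNReal.ofReal (ρ x)).map p =
      ν.withDensity fun t => ENNReal.ofReal (g t))
    {ψ : β → ℝ} (hψ : Measurable ψ) :
    ∫ x, ρ x * ψ (p x) ∂μ = ∫ t, g t * ψ t ∂ν := by
  rw [← integral_withDensity_ofReal hρ hρ0, ← integral_map hp.aemeasurable hψ.aestronglyMeasurable,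
    hmap, integral_withDensity_ofReal hg hg0]

theorem integrable_mul_comp_iff_of_map_withDensity_eq (hρ : Measurable ρ) (hρ0 : ∀ x, 0 ≤ ρ x)
    (hg : Measurable g) (hg0 : ∀ t, 0 ≤ g t) (hp : Measurable p)
    (hmap : (μ.withDensity fun x => ENNReal.ofReal (ρ x)).map p =
      ν.withDensity fun t => ENNReal.ofReal (g t))
    {ψ : β → ℝ} (hψ : Measurable ψ) :
    Integrable (fun x => ρ x * ψ (p x)) μ ↔ Integrable (fun t => g t * ψ t) ν := by
  rw [← integrable_withDensity_ofReal_iff hρ hρ0, ← integrable_withDensity_ofReal_iff hg hg0,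
    ← hmap, integrable_map_measure hψ.aestronglyMeasurable hp.aemeasurable]
  rfl

theorem integrable_and_integral_eq_of_map_withDensity_eq (hρ : Measurable ρ) (hρ0 : ∀ x, 0 ≤ ρ x)
    (hg : Measurable g) (hg0 : ∀ t, 0 ≤ g t) (hp : Measurable p)
    (hmap : (μ.withDensity fun x => ENNReal.ofReal (ρ x)).map p =
      ν.withDensity fun t => ENNReal.ofReal (g t))
    (hρi : Integrable ρ μ) :
    Integrable g ν ∧ ∫ t, g t ∂ν = ∫ x, ρ x ∂μ := by
  have hint := integrable_mul_comp_iff_of_map_withDensity_eq hρ hρ0 hg hg0 hp hmap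
    (measurable_const (a := (1 : ℝ)))
  have heq := integral_mul_comp_of_map_withDensity_eq hρ hρ0 hg hg0 hp hmap
    (measurable_const (a := (1 : ℝ)))
  simp only [mul_one] at hint heq
  exact ⟨hint.1 hρi, heq.symm⟩

theorem integral_pos_of_map_withDensity_eq {h : β → ℝ} (hρ : Measurable ρ) (hg : Measurable g)
    (hp : Measurable p)
    (hmap : (μ.withDensity fun x => ENNReal.ofReal (ρ x)).map p =
      ν.withDensity fun t => ENNReal.ofReal (g t))
    (hmass : ∫⁻ x, ENNReal.ofReal (ρ x) ∂μ ≠ 0) (hh0 : ∀ t, 0 ≤ h t) (hh : Integrable h ν)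
    (hρh : ∀ x, 0 < ρ x → 0 < h (p x)) :
    0 < ∫ t, h t ∂ν := by
  refine (integral_nonneg hh0).lt_of_ne fun h_eq => hmass ?_
  have hh_ae := (integral_eq_zero_iff_of_nonneg hh0 hh).1 h_eq.symm
  have hρ_ae := ae_comp_of_map_withDensity_eq hρ hg hp hmap (hh_ae.mono fun t ht _ => ht)
  refine lintegral_eq_zero_of_ae_eq_zero ?_
  filter_upwards [hρ_ae] with x hx
  by_contra hρx
  have hρx : 0 < ρ x := ofReal_pos.1 (pos_iff_ne_zero.2 hρx)
  exact (hρh x hρx).ne' (hx hρx)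

theorem integrable_and_integral_mul_div_self_le {h : β → ℝ} (hg : Measurable g)
    (hg0 : ∀ t, 0 ≤ g t) (hh : Measurable h) (hh0 : ∀ t, 0 ≤ h t) (hhi : Integrable h ν) :
    Integrable (fun t => g t * (h t / g t)) ν ∧ ∫ t, g t * (h t / g t) ∂ν ≤ ∫ t, h t ∂ν := by
  have hle : ∀ t, g t * (h t / g t) ≤ h t := fun t => by
    rcases (hg0 t).eq_or_lt with h0 | h0
    · simp [← h0, hh0 t]
    · rw [mul_div_cancel₀ _ h0.ne']
  have hint : Integrable (fun t => g t * (h t / g t)) ν :=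
    hhi.mono' (by fun_prop) (ae_of_all _ fun t => by
      rw [Real.norm_of_nonneg (mul_nonneg (hg0 t) (div_nonneg (hh0 t) (hg0 t)))]; exact hle t)
  exact ⟨hint, integral_mono hint hhi hle⟩

theorem integrable_and_integral_mul_log_add_div_sub_one_le {h : β → ℝ} {a : ℝ}
    (hg : Measurable g) (hg0 : ∀ t, 0 ≤ g t) (hgi : Integrable g ν)
    (hgone : ∫ t, g t ∂ν = 1) (hgent : Integrable (fun t => g t * Real.log (g t)) ν)
    (hh : Measurable h) (hh0 : ∀ t, 0 ≤ h t) (hhi : Integrable h ν) (ha : ∫ t, h t ∂ν = a)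
    (ha0 : 0 < a) :
    Integrable (fun t => g t * (Real.log (g t) + Real.log a + h t / a / g t - 1)) ν ∧
      ∫ t, g t * (Real.log (g t) + Real.log a + h t / a / g t - 1) ∂ν ≤
        ∫ t, g t * Real.log (g t) ∂ν + Real.log a := by
  obtain ⟨hratio, hratio_le⟩ := integrable_and_integral_mul_div_self_le hg hg0 (hh.div_const a)
    (fun t => div_nonneg (hh0 t) ha0.le) (hhi.div_const a)
  have hsplit : (fun t => g t * (Real.log (g t) + Real.log a + h t / a / g t - 1)) =
      fun t => g t * Real.log (g t) + g t * Real.log a + g t * (h t / a / g t) - g t := by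
    ext t; ring
  have hint₁ : Integrable (fun t => g t * Real.log (g t) + g t * Real.log a) ν :=
    hgent.add (hgi.mul_const _)
  have hint₂ : Integrable (fun t => g t * Real.log (g t) + g t * Real.log a +
      g t * (h t / a / g t)) ν := hint₁.add hratio
  rw [integral_div, ha, div_self ha0.ne'] at hratio_le
  rw [hsplit, integral_sub hint₂ hgi, integral_add hint₁ hratio,
    integral_add hgent (hgi.mul_const _), integral_mul_const, hgone]
  exact ⟨hint₂.sub hgi, by linarith⟩

end WithDensity

theorem pos_of_prod_pos {ι R : Type*} [Fintype ι] [CommMonoidWithZero R] [PartialOrder R]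
    {y : ι → R} (hy : ∀ k, 0 ≤ y k) (hprod : 0 < ∏ k, y k) (k : ι) : 0 < y k :=
  (hy k).lt_of_ne' fun hk => hprod.ne' (Finset.prod_eq_zero (Finset.mem_univ k) hk)

theorem mul_log_add_mul_log_le {ι : Type*} [Fintype ι] {G N : ℝ} {c a y z : ι → ℝ}
    (hG0 : 0 ≤ G) (hN : 0 < N) (hc : ∀ k, 0 < c k) (ha : ∀ k, 0 < a k) (hy0 : ∀ k, 0 ≤ y k)
    (hGN : G * N = ∏ k, y k) (hz : 0 < G → ∀ k, 0 < z k) :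
    G * Real.log G + G * Real.log N ≤
      ∑ k, c k * (G * (Real.log (z k) + Real.log (a k) + y k ^ (1 / c k) / a k / z k - 1)) := by
  rcases hG0.eq_or_lt with rfl | hG
  · simp
  have hy : ∀ k, 0 < y k := pos_of_prod_pos hy0 (hGN ▸ mul_pos hG hN)
  have hz := hz hG
  have hu : ∀ k, 0 < y k ^ (1 / c k) / a k / z k := fun k =>
    div_pos (div_pos (Real.rpow_pos_of_pos (hy k) _) (ha k)) (hz k)
  have hlog_y (k : ι) : Real.log (y k) =
      c k * (Real.log (z k) + Real.log (a k) + Real.log (y k ^ (1 / c k) / a k / z k)) := by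
    rw [Real.log_div (div_pos (Real.rpow_pos_of_pos (hy k) _) (ha k)).ne' (hz k).ne',
      Real.log_div (Real.rpow_pos_of_pos (hy k) _).ne' (ha k).ne', Real.log_rpow (hy k)]
    field_simp [(hc k).ne']
    ring
  calc G * Real.log G + G * Real.log N = G * ∑ k, Real.log (y k) := by
        rw [← mul_add, ← Real.log_mul hG.ne' hN.ne', hGN, Real.log_prod fun k _ => (hy k).ne']
    _ ≤ G * ∑ k, c k * (Real.log (z k) + Real.log (a k) + (y k ^ (1 / c k) / a k / z k - 1)) := by
        simp_rw [hlog_y]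
        gcongr with k
        · exact (hc k).le
        · exact Real.log_le_sub_one_of_pos (hu k)
    _ = _ := by
        rw [Finset.mul_sum]
        congr 1 with k
        ring

theorem le_ofReal_exp_mul_prod_rpow {ι : Type*} [Fintype ι] {N : ℝ≥0∞} {L : ι → ℝ≥0∞} {D : ℝ}
    {c : ι → ℝ} (hN0 : N ≠ 0) (hN : N ≠ ⊤) (hL0 : ∀ j, L j ≠ 0) (hL : ∀ j, L j ≠ ⊤)
    (hlog : Real.log N.toReal ≤ D + ∑ j, c j * Real.log (L j).toReal) :
    N ≤ ENNReal.ofReal (Real.exp D) * ∏ j, L j ^ c j := by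
  have hLpos : ∀ j, 0 < (L j).toReal := fun j => toReal_pos (hL0 j) (hL j)
  calc N = ENNReal.ofReal (Real.exp (Real.log N.toReal)) := by
        rw [Real.exp_log (toReal_pos hN0 hN), ofReal_toReal hN]
    _ ≤ ENNReal.ofReal (Real.exp (D + ∑ j, c j * Real.log (L j).toReal)) := by gcongr
    _ = ENNReal.ofReal (Real.exp D) * ∏ j, L j ^ c j := by
        rw [Real.exp_add, ENNReal.ofReal_mul (Real.exp_nonneg D), Real.exp_sum,
          ofReal_prod_of_nonneg fun j _ => Real.exp_nonneg _]
        congr 1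
        refine Finset.prod_congr rfl fun j _ => ?_
        rw [mul_comm, ← Real.rpow_def_of_pos (hLpos j), ← ofReal_rpow_of_pos (hLpos j),
          ofReal_toReal (hL j)]

section BrascampLieb

variable {Ω ι : Type*} [MeasurableSpace Ω] [Fintype ι] {μ : Measure Ω} {M : ι → Type*}
  [∀ j, MeasurableSpace (M j)] {ν : ∀ j, Measure (M j)} {p : ∀ j, Ω → M j} {c : ι → ℝ}
  {f g : ∀ j, M j → ℝ} {G : Ω → ℝ} {N : ℝ}

theorem integral_mul_log_add_log_le (hp : ∀ j, Measurable (p j)) (hc : ∀ j, 0 < c j)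
    (hf : ∀ j, Measurable (f j)) (hf0 : ∀ j t, 0 ≤ f j t)
    (hfi : ∀ j, Integrable (fun t => f j t ^ (1 / c j)) (ν j))
    (hfpos : ∀ j, 0 < ∫ t, f j t ^ (1 / c j) ∂ν j)
    (hN : 0 < N) (hGN : ∀ x, G x * N = ∏ j, f j (p j x))
    (hG : Measurable G) (hG0 : ∀ x, 0 ≤ G x) (hGmass : ∫⁻ x, ENNReal.ofReal (G x) ∂μ = 1)
    (hGent : Integrable (fun x => G x * Real.log (G x)) μ)
    (hg : ∀ j, Measurable (g j)) (hg0 : ∀ j t, 0 ≤ g j t)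
    (hmap : ∀ j, (μ.withDensity fun x => ENNReal.ofReal (G x)).map (p j) =
      (ν j).withDensity fun t => ENNReal.ofReal (g j t))
    (hgent : ∀ j, Integrable (fun t => g j t * Real.log (g j t)) (ν j)) :
    ∫ x, G x * Real.log (G x) ∂μ + Real.log N ≤
      ∑ j, c j * ∫ t, g j t * Real.log (g j t) ∂ν j +
        ∑ j, c j * Real.log (∫ t, f j t ^ (1 / c j) ∂ν j) := by
  set A := fun j => ∫ t, f j t ^ (1 / c j) ∂ν j
  -- `log u ≤ u - 1` makes `ψ j ≥ log (f j) / c j`; unlike `G * log (f j ∘ p j)`, the function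
  -- `G * ψ j ∘ p j` is integrable.
  set ψ := fun j t => Real.log (g j t) + Real.log (A j) + f j t ^ (1 / c j) / A j / g j t - 1
  have hGi : Integrable G μ := (lintegral_ofReal_ne_top_iff_integrable hG.aestronglyMeasurable
    (ae_of_all _ hG0)).1 (hGmass ▸ one_ne_top)
  have hGone : ∫ x, G x ∂μ = 1 := by
    rw [integral_eq_lintegral_of_nonneg_ae (ae_of_all _ hG0) hG.aestronglyMeasurable, hGmass,
      toReal_one]
  have hterm (j : ι) : Integrable (fun x => G x * ψ j (p j x)) μ ∧
      ∫ x, G x * ψ j (p j x) ∂μ ≤ ∫ t, g j t * Real.log (g j t) ∂ν j + Real.log (A j) := by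
    obtain ⟨hgi, hgone⟩ :=
      integrable_and_integral_eq_of_map_withDensity_eq hG hG0 (hg j) (hg0 j) (hp j) (hmap j) hGi
    rw [integrable_mul_comp_iff_of_map_withDensity_eq hG hG0 (hg j) (hg0 j) (hp j) (hmap j)
      (by fun_prop), integral_mul_comp_of_map_withDensity_eq hG hG0 (hg j) (hg0 j) (hp j)
      (hmap j) (by fun_prop)]
    exact integrable_and_integral_mul_log_add_div_sub_one_le (hg j) (hg0 j) hgi
      (hgone.trans hGone) (hgent j) (by fun_prop) (fun t => Real.rpow_nonneg (hf0 j t) _)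
      (hfi j) rfl (hfpos j)
  have hpointwise : ∀ᵐ x ∂μ,
      G x * Real.log (G x) + G x * Real.log N ≤ ∑ j, c j * (G x * ψ j (p j x)) := by
    have hgpos : ∀ᵐ x ∂μ, ∀ j, 0 < G x → 0 < g j (p j x) := ae_all_iff.2 fun j =>
      ae_comp_of_map_withDensity_eq hG (hg j) (hp j) (hmap j) (ae_of_all _ fun _ ht => ht)
    filter_upwards [hgpos] with x hx
    exact mul_log_add_mul_log_le (hG0 x) hN hc hfpos (fun j => hf0 j (p j x)) (hGN x)
      fun hGx j => hx j hGx
  have hsum_int : ∀ j ∈ Finset.univ, Integrable (fun x => c j * (G x * ψ j (p j x))) μ :=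
    fun j _ => (hterm j).1.const_mul _
  calc ∫ x, G x * Real.log (G x) ∂μ + Real.log N
      = ∫ x, G x * Real.log (G x) + G x * Real.log N ∂μ := by
        rw [integral_add hGent (hGi.mul_const _), integral_mul_const, hGone, one_mul]
    _ ≤ ∫ x, ∑ j, c j * (G x * ψ j (p j x)) ∂μ :=
        integral_mono_ae (hGent.add (hGi.mul_const _)) (integrable_finsetSum _ hsum_int) hpointwise
    _ = ∑ j, c j * ∫ x, G x * ψ j (p j x) ∂μ := by
        simp_rw [integral_finsetSum _ hsum_int, integral_const_mul]
    _ ≤ ∑ j, c j * (∫ t, g j t * Real.log (g j t) ∂ν j + Real.log (A j)) := by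
        gcongr with j
        · exact (hc j).le
        · exact (hterm j).2
    _ = _ := by simp_rw [mul_add, Finset.sum_add_distrib]; rfl

end BrascampLieb

theorem entropy_subadditivity_implies_brascamp_lieb_general
    {Ω : Type*} [MeasurableSpace Ω] (μ : Measure Ω)
    (m : ℕ)
    (M : Fin m → Type*) [∀ j, MeasurableSpace (M j)] (ν : ∀ j, Measure (M j))
    (p : ∀ j, Ω → M j) (hp : ∀ j, Measurable (p j))
    (D : ℝ) (c : Fin m → ℝ) (hc : ∀ j, 0 < c j)
    (W₀ : Set (Ω → ℝ))
    (hW₀ : ∀ f ∈ W₀, Measurable f ∧ (∀ x, 0 ≤ f x) ∧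
      (∫⁻ x, ENNReal.ofReal (f x) ∂μ) = 1 ∧
      Integrable (fun x => f x * Real.log (f x)) μ ∧
      ∀ j, ∃ g : M j → ℝ, Measurable g ∧ (∀ t, 0 ≤ g t) ∧
        (μ.withDensity fun x => ENNReal.ofReal (f x)).map (p j) =
          (ν j).withDensity (fun t => ENNReal.ofReal (g t)) ∧
        Integrable (fun t => g t * Real.log (g t)) (ν j))
    (hsub : ∀ f ∈ W₀, ∀ fp : ∀ j, M j → ℝ,
      (∀ j, Measurable (fp j)) → (∀ j t, 0 ≤ fp j t) →
      (∀ j, (μ.withDensity fun x => ENNReal.ofReal (f x)).map (p j) =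
        (ν j).withDensity fun t => ENNReal.ofReal (fp j t)) →
      ∑ j, c j * ∫ t, fp j t * Real.log (fp j t) ∂ν j ≤
        (∫ x, f x * Real.log (f x) ∂μ) + D)
    (f : ∀ j, M j → ℝ) (hf : ∀ j, Measurable (f j)) (hf0 : ∀ j t, 0 ≤ f j t)
    (hfint : ∀ j, ∫⁻ t, ENNReal.ofReal (f j t ^ (1 / c j)) ∂ν j < ⊤)
    (hpos : 0 < ∫⁻ x, ∏ j, ENNReal.ofReal (f j (p j x)) ∂μ)
    (hfin : ∫⁻ x, ∏ j, ENNReal.ofReal (f j (p j x)) ∂μ < ⊤)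
    (hmem : (fun x => (∏ j, f j (p j x)) /
        (∫⁻ x', ∏ j, ENNReal.ofReal (f j (p j x')) ∂μ).toReal) ∈ W₀) :
    ∫⁻ x, ∏ j, ENNReal.ofReal (f j (p j x)) ∂μ ≤
      ENNReal.ofReal (Real.exp D) *
        ∏ j, (∫⁻ t, ENNReal.ofReal (f j t ^ (1 / c j)) ∂ν j) ^ (c j) := by
  set N := ∫⁻ x, ∏ j, ENNReal.ofReal (f j (p j x)) ∂μ
  set G : Ω → ℝ := fun x => (∏ j, f j (p j x)) / N.toReal
  have hN : 0 < N.toReal := toReal_pos hpos.ne' hfin.ne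
  have hGN : ∀ x, G x * N.toReal = ∏ j, f j (p j x) := fun x => div_mul_cancel₀ _ hN.ne'
  obtain ⟨hG, hG0, hGmass, hGent, hpush⟩ := hW₀ G hmem
  choose g hg hg0 hmap hgent using hpush
  have hrpow0 : ∀ j t, 0 ≤ f j t ^ (1 / c j) := fun j t => Real.rpow_nonneg (hf0 j t) _
  have hfi : ∀ j, Integrable (fun t => f j t ^ (1 / c j)) (ν j) := fun j =>
    (lintegral_ofReal_ne_top_iff_integrable ((hf j).pow_const _).aestronglyMeasurable
      (ae_of_all _ (hrpow0 j))).1 (hfint j).ne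
  have hA_toReal : ∀ j, ∫ t, f j t ^ (1 / c j) ∂ν j =
      (∫⁻ t, ENNReal.ofReal (f j t ^ (1 / c j)) ∂ν j).toReal := fun j =>
    integral_eq_lintegral_of_nonneg_ae (ae_of_all _ (hrpow0 j)) (hfi j).1
  have hApos : ∀ j, 0 < ∫ t, f j t ^ (1 / c j) ∂ν j := fun j =>
    integral_pos_of_map_withDensity_eq hG (hg j) (hp j) (hmap j) (hGmass ▸ one_ne_zero)
      (hrpow0 j) (hfi j) fun x hGx =>
        Real.rpow_pos_of_pos (pos_of_prod_pos (fun k => hf0 k _) (hGN x ▸ mul_pos hGx hN) j) _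
  have hgibbs := integral_mul_log_add_log_le hp hc hf hf0 hfi hApos hN hGN hG hG0 hGmass hGent
    hg hg0 hmap hgent
  have hsubG := hsub G hmem g hg hg0 hmap
  refine le_ofReal_exp_mul_prod_rpow hpos.ne' hfin.ne
    (fun j => (toReal_pos_iff.1 (hA_toReal j ▸ hApos j)).1.ne') (fun j => (hfint j).ne) ?_
  simp only [← hA_toReal]
  linarith

/-- **Subadditivity of entropy implies Brascamp–Lieb** (Theorem 2.7(ii) of the
paper, after Carlen–Cordero-Erausquin): let `W₀` be a set of probability densities
on `Ω` contained in the class `W` (finite entropy, pushforwards under the `p_j`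
absolutely continuous with densities of finite entropy). If every `f ∈ W₀`
satisfies the subadditivity `∑ c_j S(f_{(p_j)}) ≤ S(f) + D`, then the
Brascamp–Lieb inequality holds for all non-negative measurable `f_j` with
`∫ f_j^{1/c_j} dν_j < ∞`, `0 < ∫ ∏ f_j ∘ p_j dμ < ∞`, whose normalized product
belongs to `W₀`. -/
theorem entropy_subadditivity_implies_brascamp_lieb
    {Ω : Type*} [MeasurableSpace Ω] (μ : Measure Ω)
    (m : ℕ) (hm : 1 ≤ m)
    (M : Fin m → Type*) [∀ j, MeasurableSpace (M j)] (ν : ∀ j, Measure (M j))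
    (p : ∀ j, Ω → M j) (hp : ∀ j, Measurable (p j))
    (D : ℝ) (c : Fin m → ℝ) (hc : ∀ j, 0 < c j)
    (W₀ : Set (Ω → ℝ))
    (hW₀ : ∀ f ∈ W₀, Measurable f ∧ (∀ x, 0 ≤ f x) ∧
      (∫⁻ x, ENNReal.ofReal (f x) ∂μ) = 1 ∧
      Integrable (fun x => f x * Real.log (f x)) μ ∧
      ∀ j, ∃ g : M j → ℝ, Measurable g ∧ (∀ t, 0 ≤ g t) ∧
        (μ.withDensity fun x => ENNReal.ofReal (f x)).map (p j) =
          (ν j).withDensity (fun t => ENNReal.ofReal (g t)) ∧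
        Integrable (fun t => g t * Real.log (g t)) (ν j))
    (hsub : ∀ f ∈ W₀, ∀ fp : ∀ j, M j → ℝ,
      (∀ j, Measurable (fp j)) → (∀ j t, 0 ≤ fp j t) →
      (∀ j, (μ.withDensity fun x => ENNReal.ofReal (f x)).map (p j) =
        (ν j).withDensity fun t => ENNReal.ofReal (fp j t)) →
      ∑ j, c j * ∫ t, fp j t * Real.log (fp j t) ∂ν j ≤
        (∫ x, f x * Real.log (f x) ∂μ) + D)
    (f : ∀ j, M j → ℝ) (hf : ∀ j, Measurable (f j)) (hf0 : ∀ j t, 0 ≤ f j t)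
    (hfint : ∀ j, ∫⁻ t, ENNReal.ofReal (f j t ^ (1 / c j)) ∂ν j < ⊤)
    (hpos : 0 < ∫⁻ x, ∏ j, ENNReal.ofReal (f j (p j x)) ∂μ)
    (hfin : ∫⁻ x, ∏ j, ENNReal.ofReal (f j (p j x)) ∂μ < ⊤)
    (hmem : (fun x => (∏ j, f j (p j x)) /
        (∫⁻ x', ∏ j, ENNReal.ofReal (f j (p j x')) ∂μ).toReal) ∈ W₀) :
    ∫⁻ x, ∏ j, ENNReal.ofReal (f j (p j x)) ∂μ ≤
      ENNReal.ofReal (Real.exp D) *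
        ∏ j, (∫⁻ t, ENNReal.ofReal (f j t ^ (1 / c j)) ∂ν j) ^ (c j) :=
  entropy_subadditivity_implies_brascamp_lieb_general μ m M ν p hp D c hc W₀ hW₀ hsub f hf hf0 hfint
    hpos hfin hmem
end

section
/- Let H(d,α) be a corank 1 Carnot group with projections {π_j}_{j=1}^{m}, m = d+2n. Suppose there are c_j > 0 (1 ≤ j ≤ m) and D ∈ ℝ with ∑_{j} c_j > 1 such that for all non-negative measurable functions f₁, …, f_m on ℝ^{d+2n}: ∫_{ℝ^{d+2n+1}} ∏_{j=1}^{m} f_j(π_j(y)) dy ≤ e^D ∏_{j=1}^{m} ‖f_j‖_{1/c_j}. Then on ℝ × ℝ^{d+2n+1}, with maps p̄₁(s,y) := y and p̄_{j+1}(s,y) := (s, π_j(y)) for 1 ≤ j ≤ m, one has ∫_{ℝ × ℝ^{d+2n+1}} ∏_{j=1}^{m+1} f_j(p̄_j(s,y)) ds dy ≤ e^{D̄} ∏_{j=1}^{m+1} ‖f_j‖_{1/c̄_j} for all non-negative measurable f₁, …, f_{m+1}, where σ := ∑_{j=1}^{m} c_j, D̄ := D/σ, c̄₁ := (σ−1)/σ,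 and c̄_{j+1} := c_j/σ for 1 ≤ j ≤ m. -/
open MeasureTheory ENNReal

/-- Delete the `j`-th coordinate of `x : ℝ^k` and append `s` as the last coordinate,
identifying `ℝ^{k-1} × ℝ` with `ℝ^k`. -/
noncomputable def deleteInsert {k : ℕ} (j : Fin k) (x : Fin k → ℝ) (s : ℝ) : Fin k → ℝ :=
  fun i => if _ : (i : ℕ) + 1 = k then s
    else if _ : (i : ℕ) < (j : ℕ) then x i
    else x ⟨(i : ℕ) + 1, by have := i.isLt; omega⟩

/-- The quadratic correction term in the `j`-th projection on the corank 1 Carnot group. -/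
noncomputable def tshift (d n : ℕ) (α : Fin n → ℝ) (j : Fin (d + 2*n))
    (x : Fin (d + 2*n) → ℝ) : ℝ :=
  if _ : (j : ℕ) < d then 0
  else (if ((j : ℕ) - d) % 2 = 0 then (1:ℝ) else -1) *
      (α ⟨((j : ℕ) - d) / 2, by have := j.isLt; omega⟩ / 2) *
      x ⟨d + 2 * (((j : ℕ) - d) / 2), by have := j.isLt; omega⟩ *
      x ⟨d + 2 * (((j : ℕ) - d) / 2) + 1, by have := j.isLt; omega⟩

/-- The `j`-th projection `π_j : H(d,α) → ℝ^{d+2n}` (for `1 ≤ j ≤ d+2n` in 1-based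
numbering), where the target `ℝ^{d+2n-1} × ℝ` is identified with `ℝ^{d+2n}` by
placing `x̂_j` in the first `d+2n-1` slots and the (shifted) `t`-variable in the
last slot. -/
noncomputable def carnotProj (d n : ℕ) (α : Fin n → ℝ) (j : Fin (d + 2*n))
    (p : (Fin (d + 2*n) → ℝ) × ℝ) : Fin (d + 2*n) → ℝ :=
  deleteInsert j p.1 (p.2 + tshift d n α j p.1)

/-! Fix `s`. Hölder's inequality with exponents `σ/(σ-1)` and `σ` separates `f₁` from
`∏ⱼ gⱼ(s, πⱼ y)`, and the `L^σ` norm of the latter is bounded by the Brascamp–Lieb inequality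
applied to the functions `gⱼ(s, ·)^σ`. Integrating in `s`, the product `∏ⱼ Aⱼ(s)^{cⱼ/σ}` of the
partial integrals `Aⱼ(s) = ∫ gⱼ(s, x)^{σ/cⱼ} dx` is bounded by the generalized Hölder inequality,
because the weights `cⱼ/σ` sum to `1`. -/

lemma eLpNorm_ofReal_eq_lintegral_rpow {X : Type*} [MeasurableSpace X] {μ : Measure X}
    {f : X → ℝ} (hf : ∀ x, 0 ≤ f x) {p : ℝ} (hp : 0 < p) :
    eLpNorm f (ENNReal.ofReal p) μ = (∫⁻ x, ENNReal.ofReal (f x) ^ p ∂μ) ^ (1 / p) := by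
  rw [eLpNorm_eq_lintegral_rpow_enorm_toReal (ENNReal.ofReal_pos.mpr hp).ne' ENNReal.ofReal_ne_top,
    ENNReal.toReal_ofReal hp.le]
  simp only [Real.enorm_eq_ofReal (hf _)]

section BrascampLieb

variable {ι : Type*} [Fintype ι] {Y : Type*} [MeasurableSpace Y] {X : ι → Type*}
  [∀ j, MeasurableSpace (X j)]

def BrascampLiebIneq (μ : Measure Y) (ν : ∀ j, Measure (X j)) (π : ∀ j, Y → X j) (c : ι → ℝ)
    (K : ℝ≥0∞) : Prop :=
  ∀ F : ∀ j, X j → ℝ, (∀ j, Measurable (F j)) → (∀ j x, 0 ≤ F j x) →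
    ∫⁻ y, ∏ j, ENNReal.ofReal (F j (π j y)) ∂μ ≤
      K * ∏ j, eLpNorm (F j) (ENNReal.ofReal (1 / c j)) (ν j)

variable {μ : Measure Y} {ν : ∀ j, Measure (X j)} {π : ∀ j, Y → X j} {c : ι → ℝ} {K : ℝ≥0∞}

namespace BrascampLiebIneq

lemma lintegral_prod_rpow_le (hBL : BrascampLiebIneq μ ν π c K) (hc : ∀ j, 0 < c j)
    {p : ℝ} (hp : 0 < p) {G : ∀ j, X j → ℝ} (hG : ∀ j, Measurable (G j))
    (hG0 : ∀ j x, 0 ≤ G j x) :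
    ∫⁻ y, (∏ j, ENNReal.ofReal (G j (π j y))) ^ p ∂μ ≤
      K * ∏ j, (∫⁻ x, ENNReal.ofReal (G j x) ^ (p / c j) ∂ν j) ^ c j := by
  have hGp : ∀ j x, ENNReal.ofReal (G j x ^ p) = ENNReal.ofReal (G j x) ^ p := fun j x =>
    (ENNReal.ofReal_rpow_of_nonneg (hG0 j x) hp.le).symm
  have hnorm : ∀ j, eLpNorm (fun x => G j x ^ p) (ENNReal.ofReal (1 / c j)) (ν j) =
      (∫⁻ x, ENNReal.ofReal (G j x) ^ (p / c j) ∂ν j) ^ c j := by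
    intro j
    rw [eLpNorm_ofReal_eq_lintegral_rpow (fun x => Real.rpow_nonneg (hG0 j x) p)
      (one_div_pos.mpr (hc j)), one_div_one_div]
    simp only [hGp, ← ENNReal.rpow_mul, mul_one_div]
  calc ∫⁻ y, (∏ j, ENNReal.ofReal (G j (π j y))) ^ p ∂μ
      = ∫⁻ y, ∏ j, ENNReal.ofReal (G j (π j y) ^ p) ∂μ := by
        simp only [hGp, ENNReal.prod_rpow_of_nonneg hp.le]
    _ ≤ K * ∏ j, eLpNorm (fun x => G j x ^ p) (ENNReal.ofReal (1 / c j)) (ν j) :=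
        hBL (fun j x => G j x ^ p) (fun j => (hG j).pow_const p)
          (fun j x => Real.rpow_nonneg (hG0 j x) p)
    _ = K * ∏ j, (∫⁻ x, ENNReal.ofReal (G j x) ^ (p / c j) ∂ν j) ^ c j := by
        simp only [hnorm]

lemma lintegral_mul_prod_le (hBL : BrascampLiebIneq μ ν π c K) (hπ : ∀ j, Measurable (π j))
    (hc : ∀ j, 0 < c j) {p q : ℝ} (hpq : p.HolderConjugate q) {f : Y → ℝ} (hf : Measurable f)
    (hf0 : ∀ y, 0 ≤ f y) {G : ∀ j, X j → ℝ} (hG : ∀ j, Measurable (G j))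
    (hG0 : ∀ j x, 0 ≤ G j x) :
    ∫⁻ y, ENNReal.ofReal (f y) * ∏ j, ENNReal.ofReal (G j (π j y)) ∂μ ≤
      eLpNorm f (ENNReal.ofReal p) μ *
        (K ^ (1 / q) * ∏ j, (∫⁻ x, ENNReal.ofReal (G j x) ^ (q / c j) ∂ν j) ^ (c j / q)) := by
  have hq : 0 < 1 / q := one_div_pos.mpr hpq.symm.pos
  have hψ : Measurable fun y => ∏ j, ENNReal.ofReal (G j (π j y)) :=
    Finset.measurable_prod _ fun j _ => ENNReal.measurable_ofReal.comp ((hG j).comp (hπ j))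
  calc ∫⁻ y, ENNReal.ofReal (f y) * ∏ j, ENNReal.ofReal (G j (π j y)) ∂μ
      ≤ (∫⁻ y, ENNReal.ofReal (f y) ^ p ∂μ) ^ (1 / p) *
          (∫⁻ y, (∏ j, ENNReal.ofReal (G j (π j y))) ^ q ∂μ) ^ (1 / q) :=
        ENNReal.lintegral_mul_le_Lp_mul_Lq μ hpq
          (ENNReal.measurable_ofReal.comp hf).aemeasurable hψ.aemeasurable
    _ ≤ eLpNorm f (ENNReal.ofReal p) μ *
          (K * ∏ j, (∫⁻ x, ENNReal.ofReal (G j x) ^ (q / c j) ∂ν j) ^ c j) ^ (1 / q) := by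
        rw [eLpNorm_ofReal_eq_lintegral_rpow hf0 hpq.pos]
        gcongr
        exact hBL.lintegral_prod_rpow_le hc hpq.symm.pos hG hG0
    _ = eLpNorm f (ENNReal.ofReal p) μ *
          (K ^ (1 / q) * ∏ j, (∫⁻ x, ENNReal.ofReal (G j x) ^ (q / c j) ∂ν j) ^ (c j / q)) := by
        rw [ENNReal.mul_rpow_of_nonneg _ _ hq.le, ← ENNReal.prod_rpow_of_nonneg hq.le]
        simp only [← ENNReal.rpow_mul, mul_one_div]

lemma lintegral_prod_line_le {S : Type*} [MeasurableSpace S] {μS : Measure S} [SFinite μS]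
    [SFinite μ] [∀ j, SFinite (ν j)] (hBL : BrascampLiebIneq μ ν π c K)
    (hπ : ∀ j, Measurable (π j)) (hc : ∀ j, 0 < c j) (hσ : 1 < ∑ j, c j)
    {f : Y → ℝ} {g : ∀ j, S × X j → ℝ} (hf : Measurable f) (hf0 : ∀ y, 0 ≤ f y)
    (hg : ∀ j, Measurable (g j)) (hg0 : ∀ j u, 0 ≤ g j u) :
    ∫⁻ u, ENNReal.ofReal (f u.2) * ∏ j, ENNReal.ofReal (g j (u.1, π j u.2)) ∂μS.prod μ ≤
      K ^ (1 / ∑ j, c j) * (eLpNorm f (ENNReal.ofReal ((∑ j, c j) / (∑ j, c j - 1))) μ *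
        ∏ j, eLpNorm (g j) (ENNReal.ofReal ((∑ j, c j) / c j)) (μS.prod (ν j))) := by
  set σ := ∑ j, c j
  have hσ0 : 0 < σ := one_pos.trans hσ
  have hconj : (σ / (σ - 1)).HolderConjugate σ :=
    (Real.HolderConjugate.conjExponent hσ).symm
  set A : ι → S → ℝ≥0∞ := fun j s => ∫⁻ x, ENNReal.ofReal (g j (s, x)) ^ (σ / c j) ∂ν j
  have hgσ : ∀ j, Measurable fun u => ENNReal.ofReal (g j u) ^ (σ / c j) := fun j =>
    (ENNReal.measurable_ofReal.comp (hg j)).pow_const _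
  have hA : ∀ j, Measurable (A j) := fun j => (hgσ j).lintegral_prod_right'
  have hnorm : ∀ j, (∫⁻ s, A j s ∂μS) ^ (c j / σ) =
      eLpNorm (g j) (ENNReal.ofReal (σ / c j)) (μS.prod (ν j)) := by
    intro j
    rw [eLpNorm_ofReal_eq_lintegral_rpow (hg0 j) (div_pos hσ0 (hc j)), one_div_div,
      lintegral_prod _ (hgσ j).aemeasurable]
  have hmeas : Measurable fun u : S × Y =>
      ENNReal.ofReal (f u.2) * ∏ j, ENNReal.ofReal (g j (u.1, π j u.2)) :=
    (ENNReal.measurable_ofReal.comp (hf.comp measurable_snd)).mul <|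
      Finset.measurable_prod _ fun j _ => ENNReal.measurable_ofReal.comp <|
        (hg j).comp (measurable_fst.prodMk ((hπ j).comp measurable_snd))
  set N := eLpNorm f (ENNReal.ofReal (σ / (σ - 1))) μ
  calc ∫⁻ u, ENNReal.ofReal (f u.2) * ∏ j, ENNReal.ofReal (g j (u.1, π j u.2)) ∂μS.prod μ
      = ∫⁻ s, ∫⁻ y, ENNReal.ofReal (f y) * ∏ j, ENNReal.ofReal (g j (s, π j y)) ∂μ ∂μS :=
        lintegral_prod _ hmeas.aemeasurable
    _ ≤ ∫⁻ s, N * (K ^ (1 / σ) * ∏ j, A j s ^ (c j / σ)) ∂μS :=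
        lintegral_mono fun s => hBL.lintegral_mul_prod_le hπ hc hconj hf hf0
          (fun j => (hg j).comp measurable_prodMk_left) (fun j x => hg0 j (s, x))
    _ = K ^ (1 / σ) * N * ∫⁻ s, ∏ j, A j s ^ (c j / σ) ∂μS := by
        rw [← lintegral_const_mul _ (Finset.measurable_prod _ fun j _ => (hA j).pow_const _)]
        simp only [mul_left_comm, mul_assoc]
    _ ≤ K ^ (1 / σ) * N * ∏ j, (∫⁻ s, A j s ∂μS) ^ (c j / σ) := by
        gcongr
        refine ENNReal.lintegral_prod_norm_pow_le _ (fun j _ => (hA j).aemeasurable) ?_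
          fun j _ => (div_pos (hc j) hσ0).le
        rw [← Finset.sum_div, div_self hσ0.ne']
    _ = K ^ (1 / σ) * (N * ∏ j, eLpNorm (g j) (ENNReal.ofReal (σ / c j)) (μS.prod (ν j))) := by
        simp only [hnorm, mul_assoc]

end BrascampLiebIneq
end BrascampLieb

lemma measurable_deleteInsert {k : ℕ} (j : Fin k) :
    Measurable fun p : (Fin k → ℝ) × ℝ => deleteInsert j p.1 p.2 :=
  measurable_pi_lambda _ fun i => by unfold deleteInsert; split_ifs <;> fun_prop

lemma measurable_tshift (d n : ℕ) (α : Fin n → ℝ) (j : Fin (d + 2*n)) :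
    Measurable (tshift d n α j) := by
  unfold tshift; split_ifs <;> fun_prop

lemma measurable_carnotProj (d n : ℕ) (α : Fin n → ℝ) (j : Fin (d + 2*n)) :
    Measurable (carnotProj d n α j) :=
  (measurable_deleteInsert j).comp <|
    measurable_fst.prodMk (measurable_snd.add ((measurable_tshift d n α j).comp measurable_fst))

theorem product_line_brascamp_lieb_general (d n : ℕ) (α : Fin n → ℝ)
    (D : ℝ) (c : Fin (d + 2*n) → ℝ) (hc : ∀ j, 0 < c j)
    (hσ : 1 < ∑ j, c j)
    (hBL : ∀ F : Fin (d + 2*n) → (Fin (d + 2*n) → ℝ) → ℝ,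
      (∀ j, Measurable (F j)) → (∀ j y, 0 ≤ F j y) →
      ∫⁻ y : (Fin (d + 2*n) → ℝ) × ℝ,
          ∏ j, ENNReal.ofReal (F j (carnotProj d n α j y)) ≤
        ENNReal.ofReal (Real.exp D) *
          ∏ j, eLpNorm (F j) (ENNReal.ofReal (1 / c j)) volume)
    (f₁ : ((Fin (d + 2*n) → ℝ) × ℝ) → ℝ)
    (g : Fin (d + 2*n) → (ℝ × (Fin (d + 2*n) → ℝ)) → ℝ)
    (hf₁ : Measurable f₁) (hf₁0 : ∀ y, 0 ≤ f₁ y)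
    (hg : ∀ j, Measurable (g j)) (hg0 : ∀ j u, 0 ≤ g j u) :
    ∫⁻ q : ℝ × ((Fin (d + 2*n) → ℝ) × ℝ),
        ENNReal.ofReal (f₁ q.2) *
          ∏ j, ENNReal.ofReal (g j (q.1, carnotProj d n α j q.2)) ≤
      ENNReal.ofReal (Real.exp (D / ∑ j, c j)) *
        (eLpNorm f₁ (ENNReal.ofReal (1 / ((∑ j, c j - 1) / ∑ j, c j))) volume *
          ∏ j, eLpNorm (g j) (ENNReal.ofReal (1 / (c j / ∑ j, c j))) volume) := by
  have hK : ENNReal.ofReal (Real.exp D) ^ (1 / ∑ j, c j) =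
      ENNReal.ofReal (Real.exp (D / ∑ j, c j)) := by
    rw [ENNReal.ofReal_rpow_of_pos (Real.exp_pos D), ← Real.exp_mul, mul_one_div]
  simp only [one_div_div, ← hK]
  exact BrascampLiebIneq.lintegral_prod_line_le (μS := volume) hBL (measurable_carnotProj d n α)
    hc hσ hf₁ hf₁0 hg hg0

/-- **Proposition 3.2 of the paper**: if a Brascamp–Lieb type inequality with
data `(c_j, D)` holds on the corank 1 Carnot group `H(d,α)` (with `σ = ∑ c_j > 1`),
then on `ℝ × H(d,α)` the inequality with constant `e^{D/σ}` and exponents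
`1/c̄₁ = σ/(σ-1)`, `1/c̄_{j+1} = σ/c_j`, holds for the maps `p̄₁(s,y) = y` and
`p̄_{j+1}(s,y) = (s, π_j y)`. -/
theorem product_line_brascamp_lieb (d n : ℕ) (hn : 1 ≤ n)
    (α : Fin n → ℝ) (hα : ∀ i, 0 < α i) (hmono : Monotone α)
    (D : ℝ) (c : Fin (d + 2*n) → ℝ) (hc : ∀ j, 0 < c j)
    (hσ : 1 < ∑ j, c j)
    (hBL : ∀ F : Fin (d + 2*n) → (Fin (d + 2*n) → ℝ) → ℝ,
      (∀ j, Measurable (F j)) → (∀ j y, 0 ≤ F j y) →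
      ∫⁻ y : (Fin (d + 2*n) → ℝ) × ℝ,
          ∏ j, ENNReal.ofReal (F j (carnotProj d n α j y)) ≤
        ENNReal.ofReal (Real.exp D) *
          ∏ j, eLpNorm (F j) (ENNReal.ofReal (1 / c j)) volume)
    (f₁ : ((Fin (d + 2*n) → ℝ) × ℝ) → ℝ)
    (g : Fin (d + 2*n) → (ℝ × (Fin (d + 2*n) → ℝ)) → ℝ)
    (hf₁ : Measurable f₁) (hf₁0 : ∀ y, 0 ≤ f₁ y)
    (hg : ∀ j, Measurable (g j)) (hg0 : ∀ j u, 0 ≤ g j u) :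
    ∫⁻ q : ℝ × ((Fin (d + 2*n) → ℝ) × ℝ),
        ENNReal.ofReal (f₁ q.2) *
          ∏ j, ENNReal.ofReal (g j (q.1, carnotProj d n α j q.2)) ≤
      ENNReal.ofReal (Real.exp (D / ∑ j, c j)) *
        (eLpNorm f₁ (ENNReal.ofReal (1 / ((∑ j, c j - 1) / ∑ j, c j))) volume *
          ∏ j, eLpNorm (g j) (ENNReal.ofReal (1 / (c j / ∑ j, c j))) volume) :=
  product_line_brascamp_lieb_general d n α D c hc hσ hBL f₁ g hf₁ hf₁0 hg hg0
end
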